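/- Let μ > 0 and T > 0, and let a and b be non-negative, non-decreasing real-valued functions on [0,T]. If y : [0,T] → ℝ is integrable and satisfies 0 ≤ y(t) ≤ a(t) + b(t) ∫_0^t ω_μ(t−s) y(s) ds for 0 ≤ t ≤ T, then y(t) ≤ a(t) E_μ(b(t) t^μ) for 0 ≤ t ≤ T. -/

import Mathlib

/-!
Work in `ℝ≥0∞`, where the Riemann–Liouville integral `I^μ f(s) = ∫_0^s ω_μ(s - r) f(r) dr`
needs no integrability. Fix `t`; monotonicity of `a` and `b` gives `y ≤ a(t) + b(t) I^μ y` on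
`[0, t]`. Iterating with the semigroup law `I^μ I^ν = I^(μ+ν)` (a Beta integral), and
`I^μ ω_(kμ+1) = ω_((k+1)μ+1)` in particular, yields
`y(t) ≤ a(t) ∑_(k < n) (b(t) t^μ)^k / Γ(1 + kμ) + b(t)^n I^(nμ) y(t)`.
Once `nμ ≥ 1` the kernel `ω_(nμ)` is increasing, so the remainder is at most
`b(t)^n ω_(nμ)(t) ∫_0^t y`, which tends to zero because Mittag-Leffler type series converge;
that convergence comes from the log-convexity of `Γ`.
-/

open MeasureTheory Real Set
open scoped RealInnerProductSpace

/-- `ω_μ(t) = t^{μ-1}/Γ(μ)`. -/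
noncomputable def omegaK (μ t : ℝ) : ℝ := t ^ (μ - 1) / Real.Gamma μ

/-- Riemann–Liouville fractional integral of order `μ` of an `H`-valued function,
with `I^0 φ = φ`. -/
noncomputable def fracInt {H : Type*} [NormedAddCommGroup H] [NormedSpace ℝ H]
    (μ : ℝ) (φ : ℝ → H) (t : ℝ) : H :=
  if μ = 0 then φ t else ∫ s in (0:ℝ)..t, omegaK μ (t - s) • φ s

/-- The Mittag-Leffler function `E_μ(z) = Σ_{n=0}^∞ z^n / Γ(1 + nμ)`. -/
noncomputable def mittagLeffler (μ z : ℝ) : ℝ := ∑' n : ℕ, z ^ n / Real.Gamma (1 + n * μ)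

open Filter Topology
open scoped ENNReal

-- The slope of `log ∘ Γ` on `[x, x + μ]` is at least its slope `log (x - 1)` on `[x - 1, x]`.
theorem Real.rpow_mul_Gamma_le_Gamma_add {x μ : ℝ} (hx : 1 < x) (hμ : 0 < μ) :
    (x - 1) ^ μ * Gamma x ≤ Gamma (x + μ) := by
  have hΓ : 0 < Gamma (x - 1) := Gamma_pos_of_pos (by linarith)
  have hlogΓ : log (Gamma x) - log (Gamma (x - 1)) = log (x - 1) := by
    rw [← log_div (Gamma_pos_of_pos (by linarith)).ne' hΓ.ne', ← sub_add_cancel x 1,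
      Gamma_add_one (by linarith), add_sub_cancel_right, mul_div_cancel_right₀ _ hΓ.ne']
  have hslope := convexOn_log_Gamma.slope_mono_adjacent (x := x - 1) (y := x) (z := x + μ)
    (by simp; linarith) (by simp; linarith) (by linarith) (by linarith)
  simp only [Function.comp_apply, sub_sub_cancel, div_one, add_sub_cancel_left, hlogΓ,
    le_div_iff₀ hμ] at hslope
  rw [← log_le_log_iff (by positivity) (Gamma_pos_of_pos (by linarith)),
    log_mul (by positivity) (Gamma_pos_of_pos (by linarith)).ne', log_rpow (by linarith)]
  linarith

theorem summable_pow_div_Gamma {μ : ℝ} (hμ : 0 < μ) (z c : ℝ) :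
    Summable fun n : ℕ => z ^ n / Gamma (n * μ + c) := by
  have hnμ : Tendsto (fun n : ℕ => n * μ) atTop atTop :=
    tendsto_natCast_atTop_atTop.atTop_mul_const hμ
  have hlim : Tendsto (fun n : ℕ => (n * μ + c - 1) ^ μ) atTop atTop :=
    (tendsto_rpow_atTop hμ).comp <| tendsto_atTop_add_const_right _ _ <|
      tendsto_atTop_add_const_right _ _ hnμ
  refine summable_of_ratio_norm_eventually_le (r := 1 / 2) (by norm_num) ?_
  filter_upwards [hlim.eventually_ge_atTop (2 * |z|), hnμ.eventually_gt_atTop (1 - c)]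
    with n hn hn1
  have hΓ : 0 < Gamma (n * μ + c) := Gamma_pos_of_pos (by linarith)
  have key := rpow_mul_Gamma_le_Gamma_add (x := n * μ + c) (by linarith) hμ
  rw [Nat.cast_succ, add_mul, one_mul, add_right_comm, norm_div, norm_div, norm_pow, norm_pow, Real.norm_of_nonneg hΓ.le,
    Real.norm_of_nonneg (Gamma_pos_of_pos (by linarith)).le, pow_succ, Real.norm_eq_abs,
    div_le_iff₀ (Gamma_pos_of_pos (by linarith))]
  have hz : |z| * Gamma (n * μ + c) ≤ 1 / 2 * Gamma (n * μ + c + μ) := by nlinarith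
  calc |z| ^ n * |z| = |z| ^ n / Gamma (n * μ + c) * (|z| * Gamma (n * μ + c)) := by
        field_simp
    _ ≤ |z| ^ n / Gamma (n * μ + c) * (1 / 2 * Gamma (n * μ + c + μ)) := by gcongr
    _ = _ := by ring

theorem tendsto_pow_mul_omegaK {μ t : ℝ} (hμ : 0 < μ) (ht : 0 < t) (B : ℝ) :
    Tendsto (fun n : ℕ => B ^ n * omegaK (n * μ) t) atTop (𝓝 0) := by
  have h := ((summable_pow_div_Gamma hμ (B * t ^ μ) 0).tendsto_atTop_zero).const_mul t⁻¹
  rw [mul_zero] at h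
  refine h.congr fun n => ?_
  rw [omegaK, rpow_sub_one ht.ne', add_zero, mul_pow, ← rpow_mul_natCast ht.le, mul_comm μ]
  ring

theorem summable_mittagLeffler {μ : ℝ} (hμ : 0 < μ) (z : ℝ) :
    Summable fun n : ℕ => z ^ n / Gamma (1 + n * μ) := by
  simpa only [add_comm] using summable_pow_div_Gamma hμ z 1

theorem mittagLeffler_nonneg {μ z : ℝ} (hμ : 0 < μ) (hz : 0 ≤ z) : 0 ≤ mittagLeffler μ z :=
  tsum_nonneg fun n => div_nonneg (pow_nonneg hz n) (Gamma_pos_of_pos (by positivity)).le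

theorem mittagLeffler_zero (μ : ℝ) : mittagLeffler μ 0 = 1 := by
  rw [mittagLeffler, tsum_eq_single 0 fun n hn => by simp [zero_pow hn]]
  simp

theorem omegaK_one (t : ℝ) : omegaK 1 t = 1 := by
  simp [omegaK]

theorem omegaK_nonneg {μ t : ℝ} (hμ : 0 < μ) (ht : 0 ≤ t) : 0 ≤ omegaK μ t :=
  div_nonneg (rpow_nonneg ht _) (Gamma_pos_of_pos hμ).le

@[fun_prop]
theorem measurable_omegaK (μ : ℝ) : Measurable (omegaK μ) := by
  unfold omegaK; fun_prop

theorem lintegral_Ioo_rpow_mul_one_sub_rpow {α β : ℝ} (hα : 0 < α) (hβ : 0 < β) :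
    ∫⁻ x in Ioo 0 1, ENNReal.ofReal (x ^ (α - 1) * (1 - x) ^ (β - 1))
      = ENNReal.ofReal (Gamma α * Gamma β / Gamma (α + β)) := by
  have h := ProbabilityTheory.lintegral_betaPDF_eq_one hα hβ
  have hB := ProbabilityTheory.beta_pos hα hβ
  simp_rw [ProbabilityTheory.lintegral_betaPDF, mul_assoc,
    ENNReal.ofReal_mul (one_div_pos.2 hB).le] at h
  rw [lintegral_const_mul' _ _ ENNReal.ofReal_ne_top, mul_comm] at h
  rw [ENNReal.eq_inv_of_mul_eq_one_left h, one_div, ENNReal.ofReal_inv_of_pos hB, inv_inv]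
  rfl

theorem lintegral_omegaK_mul_omegaK {μ ν r s : ℝ} (hμ : 0 < μ) (hν : 0 < ν) (hrs : r < s) :
    ∫⁻ u in Ioo r s, ENNReal.ofReal (omegaK μ (s - u)) * ENNReal.ofReal (omegaK ν (u - r))
      = ENNReal.ofReal (omegaK (μ + ν) (s - r)) := by
  set c := s - r
  have hc : 0 < c := sub_pos.2 hrs
  have himage : (fun x => c * x + r) '' Ioo 0 1 = Ioo r s := by
    rw [image_affine_Ioo hc]; congr 1 <;> simp [c]
  have hpow : c ^ (μ + ν - 1) = c * c ^ (μ - 1) * c ^ (ν - 1) := by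
    rw [show μ + ν - 1 = 1 + (μ - 1) + (ν - 1) by ring, rpow_add hc, rpow_add hc, rpow_one]
  rw [← himage, lintegral_image_eq_lintegral_abs_deriv_mul measurableSet_Ioo
      (fun x _ => ((hasDerivAt_id' x).const_mul c |>.add_const r).hasDerivWithinAt)
      fun x _ y _ h => by simpa [hc.ne'] using h]
  calc _ = ∫⁻ x in Ioo 0 1, ENNReal.ofReal (c ^ (μ + ν - 1) / (Gamma μ * Gamma ν))
        * ENNReal.ofReal (x ^ (ν - 1) * (1 - x) ^ (μ - 1)) := by
        refine setLIntegral_congr_fun measurableSet_Ioo fun x ⟨hx0, hx1⟩ => ?_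
        rw [mul_one, abs_of_pos hc, ← ENNReal.ofReal_mul (omegaK_nonneg hμ (by nlinarith)),
          ← ENNReal.ofReal_mul hc.le,
          ← ENNReal.ofReal_mul (by positivity)]
        congr 1
        rw [omegaK, omegaK, show s - (c * x + r) = c * (1 - x) by ring, add_sub_cancel_right,
          mul_rpow hc.le (by linarith), mul_rpow hc.le hx0.le, hpow]
        field_simp
    _ = ENNReal.ofReal (omegaK (μ + ν) c) := by
        rw [lintegral_const_mul' _ _ ENNReal.ofReal_ne_top,
          lintegral_Ioo_rpow_mul_one_sub_rpow hν hμ, ← ENNReal.ofReal_mul (by positivity),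
          omegaK, add_comm ν μ]
        field_simp

theorem lintegral_Ioo_lintegral_Ioo_swap {a b : ℝ} {f : ℝ → ℝ → ℝ≥0∞}
    (hf : Measurable (Function.uncurry f)) :
    ∫⁻ u in Ioo a b, ∫⁻ r in Ioo a u, f u r = ∫⁻ r in Ioo a b, ∫⁻ u in Ioo r b, f u r := by
  set S : Set (ℝ × ℝ) := {p | a < p.2 ∧ p.2 < p.1 ∧ p.1 < b}
  have hS : MeasurableSet S :=
    (measurableSet_lt measurable_const measurable_snd).inter
      ((measurableSet_lt measurable_snd measurable_fst).inter
        (measurableSet_lt measurable_fst measurable_const))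
  have hL : ∀ u, (Ioo a b).indicator (fun u => ∫⁻ r in Ioo a u, f u r) u
      = ∫⁻ r, S.indicator (Function.uncurry f) (u, r) := by
    intro u
    by_cases hu : u ∈ Ioo a b
    · rw [indicator_of_mem hu, ← lintegral_indicator measurableSet_Ioo]
      refine lintegral_congr fun r => ?_
      by_cases hr : r ∈ Ioo a u
      · rw [indicator_of_mem hr, indicator_of_mem (show (u, r) ∈ S from ⟨hr.1, hr.2, hu.2⟩)]
        rfl
      · rw [indicator_of_notMem hr, indicator_of_notMem fun h => hr ⟨h.1, h.2.1⟩]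
    · rw [indicator_of_notMem hu, lintegral_congr fun r => indicator_of_notMem
        (fun h : (u, r) ∈ S => hu ⟨h.1.trans h.2.1, h.2.2⟩) _, lintegral_zero]
  have hR : ∀ r, (Ioo a b).indicator (fun r => ∫⁻ u in Ioo r b, f u r) r
      = ∫⁻ u, S.indicator (Function.uncurry f) (u, r) := by
    intro r
    by_cases hr : r ∈ Ioo a b
    · rw [indicator_of_mem hr, ← lintegral_indicator measurableSet_Ioo]
      refine lintegral_congr fun u => ?_
      by_cases hu : u ∈ Ioo r b
      · rw [indicator_of_mem hu, indicator_of_mem (show (u, r) ∈ S from ⟨hr.1, hu.1, hu.2⟩)]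
        rfl
      · rw [indicator_of_notMem hu, indicator_of_notMem fun h => hu ⟨h.2.1, h.2.2⟩]
    · rw [indicator_of_notMem hr, lintegral_congr fun u => indicator_of_notMem
        (fun h : (u, r) ∈ S => hr ⟨h.1, h.2.1.trans h.2.2⟩) _, lintegral_zero]
  rw [← lintegral_indicator measurableSet_Ioo, ← lintegral_indicator measurableSet_Ioo]
  simp only [hL, hR]
  exact lintegral_lintegral_swap ((hf.indicator hS).comp measurable_id).aemeasurable

/-- `I^μ f (s)`, the `ℝ≥0∞`-valued counterpart of `fracInt`. -/
noncomputable def fracLIntegral (μ : ℝ) (f : ℝ → ℝ≥0∞) (s : ℝ) : ℝ≥0∞ :=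
  ∫⁻ r in Ioo 0 s, ENNReal.ofReal (omegaK μ (s - r)) * f r

theorem fracLIntegral_congr_ae {μ t s : ℝ} {f g : ℝ → ℝ≥0∞}
    (h : ∀ᵐ r ∂volume.restrict (Ioo 0 t), f r = g r) (hs : s ≤ t) :
    fracLIntegral μ f s = fracLIntegral μ g s :=
  lintegral_congr_ae <| (ae_restrict_of_ae_restrict_of_subset (Ioo_subset_Ioo_right hs) h).mono
    fun r hr => by simp only [hr]

theorem fracLIntegral_omegaK {μ ν s : ℝ} (hμ : 0 < μ) (hν : 0 < ν) (hs : 0 < s) :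
    fracLIntegral μ (fun r => ENNReal.ofReal (omegaK ν r)) s
      = ENNReal.ofReal (omegaK (μ + ν) s) := by
  simpa [fracLIntegral] using lintegral_omegaK_mul_omegaK hμ hν hs

theorem fracLIntegral_fracLIntegral {μ ν : ℝ} (hμ : 0 < μ) (hν : 0 < ν) {f : ℝ → ℝ≥0∞}
    (hf : Measurable f) (s : ℝ) :
    fracLIntegral μ (fracLIntegral ν f) s = fracLIntegral (μ + ν) f s := by
  calc fracLIntegral μ (fracLIntegral ν f) s
      = ∫⁻ u in Ioo 0 s, ∫⁻ r in Ioo 0 u,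
          ENNReal.ofReal (omegaK μ (s - u)) * ENNReal.ofReal (omegaK ν (u - r)) * f r := by
        simp only [fracLIntegral, ← lintegral_const_mul' _ _ ENNReal.ofReal_ne_top, mul_assoc]
    _ = ∫⁻ r in Ioo 0 s, (∫⁻ u in Ioo r s,
          ENNReal.ofReal (omegaK μ (s - u)) * ENNReal.ofReal (omegaK ν (u - r))) * f r := by
        rw [lintegral_Ioo_lintegral_Ioo_swap (by fun_prop)]
        refine lintegral_congr fun r => ?_
        rw [lintegral_mul_const _ (by fun_prop)]
    _ = fracLIntegral (μ + ν) f s :=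
        setLIntegral_congr_fun measurableSet_Ioo fun r hr => by
          rw [lintegral_omegaK_mul_omegaK hμ hν hr.2]

theorem fracLIntegral_le_omegaK_mul {ν s : ℝ} (hν : 1 ≤ ν) (f : ℝ → ℝ≥0∞) :
    fracLIntegral ν f s ≤ ENNReal.ofReal (omegaK ν s) * ∫⁻ r in Ioo 0 s, f r := by
  rw [fracLIntegral, ← lintegral_const_mul' _ _ ENNReal.ofReal_ne_top]
  refine setLIntegral_mono' measurableSet_Ioo fun r ⟨hr0, hrs⟩ => ?_
  gcongr
  exact div_le_div_of_nonneg_right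
    (rpow_le_rpow (by linarith) (by linarith) (by linarith)) (Gamma_pos_of_pos (by linarith)).le

theorem add_mul_fracLIntegral_le_sum_add {μ t : ℝ} (hμ : 0 < μ) {A B : ℝ≥0∞} (hB : B ≠ ⊤)
    {f : ℝ → ℝ≥0∞} (hf : Measurable f)
    (hle : ∀ᵐ s ∂volume.restrict (Ioo 0 t), f s ≤ A + B * fracLIntegral μ f s) (n : ℕ)
    {s : ℝ} (hs : s ∈ Ioc 0 t) :
    A + B * fracLIntegral μ f s
      ≤ ∑ k ∈ Finset.range (n + 1), A * B ^ k * ENNReal.ofReal (omegaK (k * μ + 1) s)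
        + B ^ (n + 1) * fracLIntegral ((n + 1 : ℕ) * μ) f s := by
  induction n generalizing s with
  | zero => simp [omegaK_one]
  | succ n ih =>
    have hfle : ∀ᵐ r ∂volume.restrict (Ioo 0 s), f r
        ≤ ∑ k ∈ Finset.range (n + 1), A * B ^ k * ENNReal.ofReal (omegaK (k * μ + 1) r)
          + B ^ (n + 1) * fracLIntegral ((n + 1 : ℕ) * μ) f r := by
      filter_upwards [ae_restrict_of_ae_restrict_of_subset (Ioo_subset_Ioo_right hs.2) hle,
        ae_restrict_mem measurableSet_Ioo] with r hr hrs
      exact hr.trans (ih ⟨hrs.1, hrs.2.le.trans hs.2⟩)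
    have hterm : ∀ k : ℕ, fracLIntegral μ
        (fun r => A * B ^ k * ENNReal.ofReal (omegaK (k * μ + 1) r)) s
        = A * B ^ k * ENNReal.ofReal (omegaK ((k + 1 : ℕ) * μ + 1) s) := by
      intro k
      simp only [fracLIntegral, mul_left_comm (ENNReal.ofReal _) (A * B ^ k)]
      rw [lintegral_const_mul _ (by fun_prop), ← fracLIntegral, fracLIntegral_omegaK hμ
        (by positivity) hs.1]
      push_cast
      ring_nf
    calc A + B * fracLIntegral μ f s
        ≤ A + B * fracLIntegral μ (fun r => ∑ k ∈ Finset.range (n + 1),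
            A * B ^ k * ENNReal.ofReal (omegaK (k * μ + 1) r)
              + B ^ (n + 1) * fracLIntegral ((n + 1 : ℕ) * μ) f r) s := by
          gcongr
          exact lintegral_mono_ae (hfle.mono fun r hr => by gcongr)
      _ = A + B * (∑ k ∈ Finset.range (n + 1),
            A * B ^ k * ENNReal.ofReal (omegaK ((k + 1 : ℕ) * μ + 1) s)
              + B ^ (n + 1) * fracLIntegral ((n + 1 + 1 : ℕ) * μ) f s) := by
          congr 2
          rw [fracLIntegral]
          simp only [mul_add, Finset.mul_sum]
          rw [lintegral_add_left (by fun_prop), lintegral_finsetSum _ fun k _ => by fun_prop]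
          congr 1
          · exact Finset.sum_congr rfl fun k _ => hterm k
          · simp only [mul_left_comm (ENNReal.ofReal _) (B ^ (n + 1))]
            rw [lintegral_const_mul' _ _ (ENNReal.pow_ne_top hB), ← fracLIntegral,
              fracLIntegral_fracLIntegral hμ (by positivity) hf]
            push_cast
            ring_nf
      _ = _ := by
          have hshift : ∑ k ∈ Finset.range (n + 1),
              B * (A * B ^ k * ENNReal.ofReal (omegaK ((k + 1 : ℕ) * μ + 1) s))
              = ∑ k ∈ Finset.range (n + 1),
                A * B ^ (k + 1) * ENNReal.ofReal (omegaK ((k + 1 : ℕ) * μ + 1) s) :=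
            Finset.sum_congr rfl fun k _ => by ring
          rw [Finset.sum_range_succ' _ (n + 1), mul_add, Finset.mul_sum, hshift]
          simp only [Nat.cast_zero, zero_mul, zero_add, omegaK_one, ENNReal.ofReal_one, pow_zero,
            mul_one]
          ring

theorem tendsto_pow_mul_fracLIntegral {μ t B : ℝ} (hμ : 0 < μ) (ht : 0 < t) (hB : 0 ≤ B)
    {f : ℝ → ℝ≥0∞} (hf : ∫⁻ r in Ioo 0 t, f r ≠ ⊤) :
    Tendsto (fun n : ℕ => ENNReal.ofReal B ^ n * fracLIntegral (n * μ) f t) atTop (𝓝 0) := by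
  have hlim := ENNReal.Tendsto.mul_const
    (ENNReal.tendsto_ofReal (tendsto_pow_mul_omegaK hμ ht B)) (Or.inr hf)
  rw [ENNReal.ofReal_zero, zero_mul] at hlim
  refine tendsto_of_tendsto_of_tendsto_of_le_of_le' tendsto_const_nhds hlim
    (Eventually.of_forall fun _ => zero_le) ?_
  filter_upwards [(tendsto_natCast_atTop_atTop.atTop_mul_const hμ).eventually_ge_atTop 1]
    with n hn
  rw [ENNReal.ofReal_mul (pow_nonneg hB n), ENNReal.ofReal_pow hB, mul_assoc]
  gcongr
  exact fracLIntegral_le_omegaK_mul hn f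

theorem sum_ofReal_pow_mul_omegaK_le_mittagLeffler {μ t A B : ℝ} (hμ : 0 < μ) (ht : 0 ≤ t)
    (hA : 0 ≤ A) (hB : 0 ≤ B) (n : ℕ) :
    ∑ k ∈ Finset.range n,
        ENNReal.ofReal A * ENNReal.ofReal B ^ k * ENNReal.ofReal (omegaK (k * μ + 1) t)
      ≤ ENNReal.ofReal (A * mittagLeffler μ (B * t ^ μ)) := by
  have hterm : ∀ k : ℕ, A * B ^ k * omegaK (k * μ + 1) t
      = A * ((B * t ^ μ) ^ k / Gamma (1 + k * μ)) := fun k => by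
    rw [omegaK, add_sub_cancel_right, mul_pow, ← rpow_mul_natCast ht, add_comm, mul_comm μ]
    ring
  have hz : 0 ≤ B * t ^ μ := mul_nonneg hB (rpow_nonneg ht μ)
  have hterm_nonneg : ∀ k : ℕ, 0 ≤ (B * t ^ μ) ^ k / Gamma (1 + k * μ) := fun k =>
    div_nonneg (pow_nonneg hz k) (Gamma_pos_of_pos (by positivity)).le
  simp only [← ENNReal.ofReal_pow hB, ← ENNReal.ofReal_mul hA,
    ← ENNReal.ofReal_mul (mul_nonneg hA (pow_nonneg hB _)), hterm]
  rw [← ENNReal.ofReal_sum_of_nonneg fun k _ => mul_nonneg hA (hterm_nonneg k), ← Finset.mul_sum]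
  exact ENNReal.ofReal_le_ofReal <| mul_le_mul_of_nonneg_left
    ((summable_mittagLeffler hμ _).sum_le_tsum _ fun k _ => hterm_nonneg k) hA

theorem ofReal_integral_le_lintegral_ofReal {α : Type*} [MeasurableSpace α] {m : Measure α}
    {f : α → ℝ} (hf : 0 ≤ᵐ[m] f) :
    ENNReal.ofReal (∫ x, f x ∂m) ≤ ∫⁻ x, ENNReal.ofReal (f x) ∂m := by
  by_cases hfm : AEStronglyMeasurable f m
  · rw [integral_eq_lintegral_of_nonneg_ae hf hfm]
    exact ENNReal.ofReal_toReal_le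
  · simp [integral_non_aestronglyMeasurable hfm]

theorem ofReal_le_add_mul_fracLIntegral {μ T t s : ℝ} (hμ : 0 < μ) {a b y : ℝ → ℝ}
    (hamono : MonotoneOn a (Icc 0 T)) (hb0 : ∀ t ∈ Icc (0:ℝ) T, 0 ≤ b t)
    (hbmono : MonotoneOn b (Icc 0 T))
    (hy : ∀ t ∈ Icc (0:ℝ) T,
      0 ≤ y t ∧ y t ≤ a t + b t * ∫ s in (0:ℝ)..t, omegaK μ (t - s) * y s)
    (ht : t ∈ Icc 0 T) (hs : s ∈ Icc 0 t) :
    ENNReal.ofReal (y s) ≤ ENNReal.ofReal (a t)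
      + ENNReal.ofReal (b t) * fracLIntegral μ (fun r => ENNReal.ofReal (y r)) s := by
  have hsT : s ∈ Icc 0 T := ⟨hs.1, hs.2.trans ht.2⟩
  have hI : ENNReal.ofReal (∫ r in (0:ℝ)..s, omegaK μ (s - r) * y r)
      ≤ fracLIntegral μ (fun r => ENNReal.ofReal (y r)) s := by
    rw [intervalIntegral.integral_of_le hs.1, integral_Ioc_eq_integral_Ioo]
    refine (ofReal_integral_le_lintegral_ofReal ?_).trans_eq ?_
    · filter_upwards [ae_restrict_mem measurableSet_Ioo] with r hr
      exact mul_nonneg (omegaK_nonneg hμ (by linarith [hr.2]))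
        (hy r ⟨hr.1.le, hr.2.le.trans hsT.2⟩).1
    · refine setLIntegral_congr_fun measurableSet_Ioo fun r hr => ?_
      exact ENNReal.ofReal_mul (omegaK_nonneg hμ (by linarith [hr.2]))
  calc ENNReal.ofReal (y s)
      ≤ ENNReal.ofReal (a s + b s * ∫ r in (0:ℝ)..s, omegaK μ (s - r) * y r) :=
        ENNReal.ofReal_le_ofReal (hy s hsT).2
    _ ≤ ENNReal.ofReal (a s) + ENNReal.ofReal (b s)
          * ENNReal.ofReal (∫ r in (0:ℝ)..s, omegaK μ (s - r) * y r) := by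
        rw [← ENNReal.ofReal_mul (hb0 s hsT)]
        exact ENNReal.ofReal_add_le
    _ ≤ _ := by
        gcongr
        exacts [hamono hsT ht hs.2, hbmono hsT ht hs.2]

theorem stmt_4_general (μ T : ℝ) (hμ : 0 < μ) (a b y : ℝ → ℝ)
    (ha0 : ∀ t ∈ Icc (0:ℝ) T, 0 ≤ a t) (hamono : MonotoneOn a (Icc (0:ℝ) T))
    (hb0 : ∀ t ∈ Icc (0:ℝ) T, 0 ≤ b t) (hbmono : MonotoneOn b (Icc (0:ℝ) T))
    (hyint : IntegrableOn y (Icc (0:ℝ) T))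
    (hy : ∀ t ∈ Icc (0:ℝ) T,
      0 ≤ y t ∧ y t ≤ a t + b t * ∫ s in (0:ℝ)..t, omegaK μ (t - s) * y s) :
    ∀ t ∈ Icc (0:ℝ) T, y t ≤ a t * mittagLeffler μ (b t * t ^ μ) := by
  intro t ht
  rcases ht.1.eq_or_lt with rfl | htpos
  · simpa [zero_rpow hμ.ne', mittagLeffler_zero] using (hy 0 ht).2
  set E := a t * mittagLeffler μ (b t * t ^ μ)
  have hIoo : Ioo 0 t ⊆ Icc 0 T := Ioo_subset_Icc_self.trans (Icc_subset_Icc_right ht.2)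
  -- the semigroup law needs a measurable integrand
  set Y : ℝ → ℝ≥0∞ := fun r => ENNReal.ofReal (hyint.aemeasurable.mk y r)
  have hyY : ∀ᵐ r ∂volume.restrict (Ioo 0 t), ENNReal.ofReal (y r) = Y r :=
    (ae_restrict_of_ae_restrict_of_subset hIoo hyint.aemeasurable.ae_eq_mk).mono
      fun r hr => by rw [hr]
  have hstep : ∀ s ∈ Icc 0 t, ENNReal.ofReal (y s)
      ≤ ENNReal.ofReal (a t) + ENNReal.ofReal (b t) * fracLIntegral μ Y s := fun s hs =>
    fracLIntegral_congr_ae hyY hs.2 ▸ ofReal_le_add_mul_fracLIntegral hμ hamono hb0 hbmono hy ht hs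
  have hYle : ∀ᵐ s ∂volume.restrict (Ioo 0 t),
      Y s ≤ ENNReal.ofReal (a t) + ENNReal.ofReal (b t) * fracLIntegral μ Y s := by
    filter_upwards [hyY, ae_restrict_mem measurableSet_Ioo] with s hs hsmem
    exact hs ▸ hstep s ⟨hsmem.1.le, hsmem.2.le⟩
  have hbound : ∀ n : ℕ, ENNReal.ofReal (y t)
      ≤ ENNReal.ofReal E + ENNReal.ofReal (b t) ^ (n + 1) * fracLIntegral ((n + 1 : ℕ) * μ) Y t :=
    fun n => (hstep t ⟨ht.1, le_rfl⟩).trans <|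
      (add_mul_fracLIntegral_le_sum_add hμ ENNReal.ofReal_ne_top
        hyint.aemeasurable.measurable_mk.ennreal_ofReal hYle n ⟨htpos, le_rfl⟩).trans <|
      add_le_add_left (sum_ofReal_pow_mul_omegaK_le_mittagLeffler hμ ht.1 (ha0 t ht) (hb0 t ht) _) _
  have hM : ∫⁻ r in Ioo 0 t, Y r ≠ ⊤ :=
    lintegral_congr_ae hyY ▸ ((hyint.mono_set hIoo).lintegral_lt_top).ne
  have hlim := ((tendsto_pow_mul_fracLIntegral hμ htpos (hb0 t ht) hM).comp
    (tendsto_add_atTop_nat 1)).const_add (ENNReal.ofReal E)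
  rw [add_zero] at hlim
  refine (ENNReal.ofReal_le_ofReal_iff ?_).1 (ge_of_tendsto' hlim hbound)
  exact mul_nonneg (ha0 t ht) (mittagLeffler_nonneg hμ (mul_nonneg (hb0 t ht) (rpow_nonneg ht.1 μ)))

/-- fractional Gronwall inequality. -/
theorem stmt_4 (μ T : ℝ) (hμ : 0 < μ) (hT : 0 < T) (a b y : ℝ → ℝ)
    (ha0 : ∀ t ∈ Icc (0:ℝ) T, 0 ≤ a t) (hamono : MonotoneOn a (Icc (0:ℝ) T))
    (hb0 : ∀ t ∈ Icc (0:ℝ) T, 0 ≤ b t) (hbmono : MonotoneOn b (Icc (0:ℝ) T))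
    (hyint : IntegrableOn y (Icc (0:ℝ) T))
    (hy : ∀ t ∈ Icc (0:ℝ) T,
      0 ≤ y t ∧ y t ≤ a t + b t * ∫ s in (0:ℝ)..t, omegaK μ (t - s) * y s) :
    ∀ t ∈ Icc (0:ℝ) T, y t ≤ a t * mittagLeffler μ (b t * t ^ μ) :=
  stmt_4_general μ T hμ a b y ha0 hamono hb0 hbmono hyint hy
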